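/- arXiv:1804.08320 — 3 statements merged into one kernel-verified Lean document; each statement's English description precedes it below -/
import Mathlib

section
/- Let Γ_i > 0 for all i, and suppose z^k is a sequence of normalised relative equilibria (∇H(z^k) = −(L/4π)∇I(z^k), I(z^k) = 1) such that min_{i<j} |z_i^k − z_j^k| → 0 as k → ∞. Then a contradiction arises; i.e., there exists ε(Γ) > 0 such that every normalised relative equilibrium z satisfies |z_i − z_j|² > ε for all i < j. -/
open scoped BigOperators
open Filter Topology

noncomputable def vortexH {N : ℕ} (Γ : Fin N → ℝ) (z : Fin N → ℂ) : ℝ :=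
  -(1 / (4 * Real.pi)) *
    ∑ i, ∑ j, if i < j then Γ i * Γ j * Real.log (Complex.normSq (z i - z j)) else 0

noncomputable def gradH {N : ℕ} (Γ : Fin N → ℝ) (z : Fin N → ℂ) (i : Fin N) : ℂ :=
  (-(1 / (2 * Real.pi)) : ℝ) •
    ∑ j ∈ Finset.univ.erase i, ((Γ i * Γ j / Complex.normSq (z i - z j)) : ℝ) • (z i - z j)

noncomputable def momI {N : ℕ} (Γ : Fin N → ℝ) (z : Fin N → ℂ) : ℝ :=
  ∑ i, Γ i * Complex.normSq (z i)

noncomputable def momP {N : ℕ} (Γ : Fin N → ℝ) (z : Fin N → ℂ) : ℝ := ∑ i, Γ i * (z i).re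

noncomputable def momQ {N : ℕ} (Γ : Fin N → ℝ) (z : Fin N → ℂ) : ℝ := ∑ i, Γ i * (z i).im

noncomputable def gradI {N : ℕ} (Γ : Fin N → ℝ) (z : Fin N → ℂ) (i : Fin N) : ℂ :=
  ((2 * Γ i) : ℝ) • z i

def CollisionFree {N : ℕ} (z : Fin N → ℂ) : Prop := ∀ i j, i ≠ j → z i ≠ z j

noncomputable def totalL {N : ℕ} (Γ : Fin N → ℝ) : ℝ :=
  ∑ i, ∑ j, if i < j then Γ i * Γ j else 0

def IsVortexSolution {N : ℕ} (Γ : Fin N → ℝ) (z : ℝ → Fin N → ℂ) : Prop :=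
  ∀ t i, (Γ i : ℂ) * deriv (fun s => z s i) t = -Complex.I * gradH Γ (z t) i

noncomputable def vortexG {N : ℕ} (Γ : Fin N → ℝ) (z : Fin N → ℂ) : ℝ :=
  ∏ i, ∏ j, if i < j then ‖z i - z j‖ ^ (Γ i * Γ j) else 1

noncomputable def gradG {N : ℕ} (Γ : Fin N → ℝ) (z : Fin N → ℂ) (i : Fin N) : ℂ :=
  ∑ j ∈ Finset.univ.erase i,
    ((Γ i * Γ j * vortexG Γ z / Complex.normSq (z i - z j)) : ℝ) • (z i - z j)

def IsGSolution {N : ℕ} (Γ : Fin N → ℝ) (z : ℝ → Fin N → ℂ) : Prop :=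
  ∀ t i, (Γ i : ℂ) * deriv (fun s => z s i) t = -Complex.I * gradG Γ (z t) i

noncomputable def pbracket {N : ℕ} (Γ : Fin N → ℝ) (f g : (Fin N → ℂ) → ℝ) (z : Fin N → ℂ) : ℝ :=
  ∑ i, (1 / Γ i) *
    (fderiv ℝ f z (Pi.single i Complex.I) * fderiv ℝ g z (Pi.single i 1) -
     fderiv ℝ f z (Pi.single i 1) * fderiv ℝ g z (Pi.single i Complex.I))

/-!
If the bound failed, there would be normalised relative equilibria with an approximate collision
whose minimal distance tends to zero. Since `momI Γ z = 1` keeps them bounded, a subsequence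
converges to a configuration `x` with a collision. Let `V` be the cluster of vortices that meet at a
collision point `p` of `x`. Pairing the equilibrium equation of each `i ∈ V` with `z i - p` and
summing over `V`, the forces inside the cluster contribute the constant `L_V = Σ_{i<j ∈ V} Γ i Γ j`
(the cluster identity), whereas the forces from outside the cluster and the right-hand side
`L Γ i ⟪z i, z i - p⟫` tend to zero along the subsequence. Hence `L_V = 0`, which is impossible
for positive vorticities.
-/

open Filter Topology

section

variable {N : ℕ} (Γ : Fin N → ℝ)

def IsRelativeEquilibrium (z : Fin N → ℂ) : Prop :=
  ∀ i, gradH Γ z i = (-(totalL Γ / (4 * Real.pi))) • gradI Γ z i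

theorem IsRelativeEquilibrium.sum_smul_sub_eq {Γ : Fin N → ℝ} {z : Fin N → ℂ}
    (hz : IsRelativeEquilibrium Γ z) (i : Fin N) :
    ∑ j ∈ Finset.univ.erase i, ((Γ i * Γ j / Complex.normSq (z i - z j) : ℝ)) • (z i - z j)
      = (totalL Γ * Γ i : ℝ) • z i := by
  have hc : (-(1 / (2 * Real.pi)) : ℝ) ≠ 0 := by simp [Real.pi_ne_zero]
  refine smul_right_injective ℂ hc ?_
  dsimp only
  change gradH Γ z i = _
  rw [hz i, gradI, smul_smul, smul_smul]
  congr 1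
  field_simp
  ring

/-- `⟪F_ij, z i - p⟫`, where `F_ij` is the force exerted by `j` on `i`. -/
noncomputable def virialTerm (p : ℂ) (z : Fin N → ℂ) (i j : Fin N) : ℝ :=
  Γ i * Γ j / Complex.normSq (z i - z j) * ((z i - z j) * (starRingEnd ℂ) (z i - p)).re

theorem virialTerm_add_virialTerm_swap (p : ℂ) {z : Fin N → ℂ} {i j : Fin N} (h : z i ≠ z j) :
    virialTerm Γ p z i j + virialTerm Γ p z j i = Γ i * Γ j := by
  have hns : Complex.normSq (z i - z j) ≠ 0 := by simpa [sub_eq_zero] using h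
  have hsum : ((z i - z j) * (starRingEnd ℂ) (z i - p)).re
      + (-(z i - z j) * (starRingEnd ℂ) (z j - p)).re = Complex.normSq (z i - z j) := by
    rw [neg_mul, Complex.neg_re, ← sub_eq_add_neg, ← Complex.sub_re, ← mul_sub, ← map_sub,
      sub_sub_sub_cancel_right, Complex.mul_conj, Complex.ofReal_re]
  rw [virialTerm, virialTerm, show z j - z i = -(z i - z j) by ring, Complex.normSq_neg,
    mul_comm (Γ j), ← mul_add, hsum, div_mul_cancel₀ _ hns]

@[simp]
theorem virialTerm_self (p : ℂ) (z : Fin N → ℂ) (i : Fin N) : virialTerm Γ p z i i = 0 := by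
  simp [virialTerm]

/-- The cluster identity: the right-hand side is `L_V`. -/
theorem sum_sum_erase_virialTerm (p : ℂ) {z : Fin N → ℂ} (V : Finset (Fin N))
    (hz : Set.InjOn z V) :
    ∑ i ∈ V, ∑ j ∈ V.erase i, virialTerm Γ p z i j
      = (1 / 2) * ∑ i ∈ V, ∑ j ∈ V.erase i, Γ i * Γ j := by
  have hswap : ∑ i ∈ V, ∑ j ∈ V.erase i, virialTerm Γ p z j i
      = ∑ i ∈ V, ∑ j ∈ V.erase i, virialTerm Γ p z i j :=
    Finset.sum_comm' fun i j => by simp only [Finset.mem_erase]; tauto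
  have hpair : ∑ i ∈ V, ∑ j ∈ V.erase i, (virialTerm Γ p z i j + virialTerm Γ p z j i)
      = ∑ i ∈ V, ∑ j ∈ V.erase i, Γ i * Γ j := by
    refine Finset.sum_congr rfl fun i hi => Finset.sum_congr rfl fun j hj => ?_
    obtain ⟨hji, hj⟩ := Finset.mem_erase.mp hj
    exact virialTerm_add_virialTerm_swap Γ p fun h => hji (hz hj hi h.symm)
  simp only [Finset.sum_add_distrib, hswap] at hpair
  linarith

/-- What is left of the paired equilibrium equations of the cluster `V` once the internal forces
are removed; it vanishes when `V` collapses to `p`. -/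
noncomputable def clusterDefect (p : ℂ) (V : Finset (Fin N)) (z : Fin N → ℂ) : ℝ :=
  ∑ i ∈ V, totalL Γ * Γ i * (z i * (starRingEnd ℂ) (z i - p)).re
    - ∑ i ∈ V, ∑ j ∈ Vᶜ, virialTerm Γ p z i j

theorem IsRelativeEquilibrium.clusterDefect_eq {Γ : Fin N → ℝ} {z : Fin N → ℂ}
    (hz : IsRelativeEquilibrium Γ z) (hcf : CollisionFree z) (p : ℂ) (V : Finset (Fin N)) :
    clusterDefect Γ p V z = (1 / 2) * ∑ i ∈ V, ∑ j ∈ V.erase i, Γ i * Γ j := by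
  have hrow : ∀ i, ∑ j, virialTerm Γ p z i j
      = totalL Γ * Γ i * (z i * (starRingEnd ℂ) (z i - p)).re := by
    intro i
    rw [← Finset.sum_erase _ (virialTerm_self Γ p z i)]
    calc ∑ j ∈ Finset.univ.erase i, virialTerm Γ p z i j
        = ((∑ j ∈ Finset.univ.erase i,
            ((Γ i * Γ j / Complex.normSq (z i - z j) : ℝ)) • (z i - z j))
            * (starRingEnd ℂ) (z i - p)).re := by
          rw [Finset.sum_mul, Complex.re_sum]
          refine Finset.sum_congr rfl fun j _ => ?_
          rw [Complex.real_smul, mul_assoc, Complex.re_ofReal_mul, virialTerm]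
      _ = totalL Γ * Γ i * (z i * (starRingEnd ℂ) (z i - p)).re := by
          rw [hz.sum_smul_sub_eq i, Complex.real_smul, mul_assoc, Complex.re_ofReal_mul]
  have hsplit : ∀ i ∈ V, ∑ j, virialTerm Γ p z i j
      = ∑ j ∈ V.erase i, virialTerm Γ p z i j + ∑ j ∈ Vᶜ, virialTerm Γ p z i j := by
    intro i _
    rw [Finset.sum_erase _ (virialTerm_self Γ p z i), Finset.sum_add_sum_compl]
  have hinj : Set.InjOn z V := fun i _ j _ h => by_contra fun hij => hcf i j hij h
  rw [clusterDefect, ← sum_sum_erase_virialTerm Γ p V hinj,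
    ← Finset.sum_congr rfl fun i _ => hrow i, Finset.sum_congr rfl hsplit,
    Finset.sum_add_distrib, add_sub_cancel_right]

theorem continuousAt_clusterDefect (p : ℂ) (V : Finset (Fin N)) {x : Fin N → ℂ}
    (hx : ∀ i ∈ V, ∀ j ∈ Vᶜ, x i ≠ x j) : ContinuousAt (clusterDefect Γ p V) x := by
  have hterm : ∀ i ∈ V, ∀ j ∈ Vᶜ, ContinuousAt (fun z => virialTerm Γ p z i j) x := by
    intro i hi j hj
    have hns : Complex.normSq (x i - x j) ≠ 0 := by simpa [sub_eq_zero] using hx i hi j hj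
    unfold virialTerm
    fun_prop (disch := exact hns)
  exact (tendsto_finsetSum _ fun i _ => (by fun_prop : ContinuousAt _ x)).sub
    (tendsto_finsetSum _ fun i hi => tendsto_finsetSum _ fun j hj => hterm i hi j hj)

theorem clusterDefect_eq_zero (p : ℂ) (V : Finset (Fin N)) {x : Fin N → ℂ}
    (hx : ∀ i ∈ V, x i = p) : clusterDefect Γ p V x = 0 := by
  have hterm : ∀ i ∈ V, (x i * (starRingEnd ℂ) (x i - p)).re = 0 := by
    intro i hi
    simp [hx i hi]
  rw [clusterDefect, Finset.sum_eq_zero fun i hi => by rw [hterm i hi, mul_zero],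
    Finset.sum_eq_zero fun i hi => Finset.sum_eq_zero fun j _ => by
      rw [virialTerm, hx i hi, sub_self, map_zero, mul_zero, Complex.zero_re, mul_zero],
    sub_zero]

theorem sum_sum_erase_mul_pos (hΓ : ∀ i, 0 < Γ i) {V : Finset (Fin N)} {i j : Fin N}
    (hi : i ∈ V) (hj : j ∈ V) (hij : i ≠ j) :
    0 < ∑ i ∈ V, ∑ j ∈ V.erase i, Γ i * Γ j := by
  have hnonneg : ∀ i j, 0 ≤ Γ i * Γ j := fun i j => (mul_pos (hΓ i) (hΓ j)).le
  refine Finset.sum_pos' (fun i _ => Finset.sum_nonneg fun j _ => hnonneg i j) ⟨i, hi, ?_⟩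
  exact Finset.sum_pos' (fun j _ => hnonneg i j)
    ⟨j, Finset.mem_erase.2 ⟨hij.symm, hj⟩, mul_pos (hΓ i) (hΓ j)⟩

theorem collisionFree_of_tendsto_of_isRelativeEquilibrium (hΓ : ∀ i, 0 < Γ i) {ι : Type*}
    {l : Filter ι} [l.NeBot] {w : ι → Fin N → ℂ} {x : Fin N → ℂ} (hw : Tendsto w l (𝓝 x))
    (hcf : ∀ n, CollisionFree (w n)) (hz : ∀ n, IsRelativeEquilibrium Γ (w n)) :
    CollisionFree x := by
  intro i₀ j₀ hij hcol
  set V := Finset.univ.filter (x · = x i₀)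
  have hi₀ : i₀ ∈ V := by simp [V]
  have hj₀ : j₀ ∈ V := by simp [V, hcol]
  have hsep : ∀ i ∈ V, ∀ j ∈ Vᶜ, x i ≠ x j := by
    intro i hi j hj
    simp only [V, Finset.mem_compl, Finset.mem_filter, Finset.mem_univ, true_and] at hi hj
    exact fun h => hj (h.symm.trans hi)
  have hlim := (continuousAt_clusterDefect Γ (x i₀) V hsep).tendsto.comp hw
  rw [clusterDefect_eq_zero Γ (x i₀) V fun i hi => by simpa [V] using hi] at hlim
  have hconst : clusterDefect Γ (x i₀) V ∘ w
      = fun _ => (1 / 2) * ∑ i ∈ V, ∑ j ∈ V.erase i, Γ i * Γ j :=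
    funext fun n => (hz n).clusterDefect_eq (hcf n) _ _
  rw [hconst] at hlim
  linarith [tendsto_nhds_unique tendsto_const_nhds hlim, sum_sum_erase_mul_pos Γ hΓ hi₀ hj₀ hij]

theorem CollisionFree.eventually_lt_normSq_sub {ι : Type*} {l : Filter ι} {w : ι → Fin N → ℂ}
    {x : Fin N → ℂ} (hx : CollisionFree x) (hw : Tendsto w l (𝓝 x)) {δ : ι → ℝ}
    (hδ : Tendsto δ l (𝓝 0)) :
    ∀ᶠ n in l, ∀ i j, i ≠ j → δ n < Complex.normSq (w n i - w n j) := by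
  refine eventually_all.2 fun i => eventually_all.2 fun j => ?_
  by_cases hij : i = j
  · exact .of_forall fun _ h => absurd hij h
  have hpos : 0 < Complex.normSq (x i - x j) := Complex.normSq_pos.2 (sub_ne_zero.2 (hx i j hij))
  have hdist : Tendsto (fun n => Complex.normSq (w n i - w n j)) l
      (𝓝 (Complex.normSq (x i - x j))) :=
    (Complex.continuous_normSq.tendsto _).comp
      ((tendsto_pi_nhds.1 hw i).sub (tendsto_pi_nhds.1 hw j))
  exact (hδ.eventually_lt hdist hpos).mono fun _ h _ => h

theorem exists_subseq_tendsto_of_momI_le (hΓ : ∀ i, 0 < Γ i) {C : ℝ} {z : ℕ → Fin N → ℂ}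
    (hz : ∀ n, momI Γ (z n) ≤ C) :
    ∃ x : Fin N → ℂ, ∃ φ : ℕ → ℕ, StrictMono φ ∧ Tendsto (z ∘ φ) atTop (𝓝 x) := by
  have hball : ∀ n i, z n i ∈ Metric.closedBall 0 √(C / Γ i) := by
    intro n i
    rw [mem_closedBall_zero_iff, Complex.norm_def]
    refine Real.sqrt_le_sqrt ((le_div_iff₀ (hΓ i)).2 ?_)
    calc Complex.normSq (z n i) * Γ i = Γ i * Complex.normSq (z n i) := mul_comm _ _
      _ ≤ momI Γ (z n) := Finset.single_le_sum (f := fun j => Γ j * Complex.normSq (z n j))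
          (fun j _ => mul_nonneg (hΓ j).le (Complex.normSq_nonneg _)) (Finset.mem_univ i)
      _ ≤ C := hz n
  obtain ⟨x, -, φ, hφ, hlim⟩ :=
    (isCompact_univ_pi fun i => isCompact_closedBall 0 √(C / Γ i)).tendsto_subseq
      fun n => Set.mem_univ_pi.2 (hball n)
  exact ⟨x, φ, hφ, hlim⟩

end

/-- mutual distances of normalised relative equilibria are uniformly bounded below. -/
theorem stmt9 {N : ℕ} (Γ : Fin N → ℝ) (hΓ : ∀ i, 0 < Γ i) :
    ∃ ε > (0 : ℝ), ∀ z : Fin N → ℂ, CollisionFree z →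
      (∀ i, gradH Γ z i = (-(totalL Γ / (4 * Real.pi))) • gradI Γ z i) →
      momI Γ z = 1 →
      ∀ i j, i ≠ j → ε < Complex.normSq (z i - z j) := by
  by_contra hcon
  push Not at hcon
  choose z hcf hz hI i j hij hle using fun n : ℕ => hcon (1 / (n + 1)) Nat.one_div_pos_of_nat
  obtain ⟨x, φ, hφ, hlim⟩ := exists_subseq_tendsto_of_momI_le Γ hΓ fun n => (hI n).le
  have hx : CollisionFree x := collisionFree_of_tendsto_of_isRelativeEquilibrium Γ hΓ hlim
    (fun n => hcf (φ n)) (fun n => hz (φ n))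
  have hδ : Tendsto (fun n => 1 / ((φ n : ℝ) + 1)) atTop (𝓝 0) :=
    tendsto_one_div_add_atTop_nhds_zero_nat.comp hφ.tendsto_atTop
  obtain ⟨n, hn⟩ := (hx.eventually_lt_normSq_sub hlim hδ).exists
  exact (hn (i (φ n)) (j (φ n)) (hij (φ n))).not_ge (hle (φ n))
end

section
/- For positive vorticities, the set H₁ of energy values of normalised relative equilibria, H₁ = { H(z) : ∇H(z) = −(L/4π)∇I(z), I(z) = 1, z collision-free }, is a closed subset of ℝ. -/
open scoped BigOperators

/-!
Near any configuration every pair term `Γᵢ Γⱼ log |zᵢ - zⱼ|²` of the sum in `H` is bounded above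
(as `log x ≤ x`), while a colliding pair drives it to `-∞`; so `H → +∞` at collisions. Hence,
among normalised relative equilibria, each energy sublevel `{H ≤ C}` stays away from collisions,
is closed, and lies in the compact set `{I ≤ 1}`. Its image under the continuous `H` is therefore
compact, and a subset of `ℝ` whose intersections with all half-lines `(-∞, C]` are closed is closed.
-/

open Filter Topology Set

def collisionFreeSet (N : ℕ) : Set (Fin N → ℂ) := {z | CollisionFree z}

lemma isOpen_collisionFreeSet (N : ℕ) : IsOpen (collisionFreeSet N) := by
  simp only [collisionFreeSet, CollisionFree, ofPred_forall]
  refine isOpen_iInter_of_finite fun i => isOpen_iInter_of_finite fun j => ?_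
  by_cases hij : i = j
  · simp [hij]
  · simpa [hij] using isOpen_ne_fun (continuous_apply i) (continuous_apply j)

lemma normSq_sub_ne_zero {N : ℕ} {z : Fin N → ℂ} (hz : CollisionFree z) {i j : Fin N}
    (hij : i ≠ j) : Complex.normSq (z i - z j) ≠ 0 :=
  Complex.normSq_eq_zero.not.mpr (sub_ne_zero.mpr (hz i j hij))

lemma continuousOn_vortexH {N : ℕ} (Γ : Fin N → ℝ) :
    ContinuousOn (vortexH Γ) (collisionFreeSet N) := by
  refine continuousOn_const.mul (continuousOn_finsetSum _ fun i _ =>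
    continuousOn_finsetSum _ fun j _ => ?_)
  split_ifs with hij
  · refine continuousOn_const.mul (ContinuousOn.log (by fun_prop) fun z hz => ?_)
    exact normSq_sub_ne_zero hz hij.ne
  · exact continuousOn_const

lemma continuousOn_gradH {N : ℕ} (Γ : Fin N → ℝ) (i : Fin N) :
    ContinuousOn (fun z => gradH Γ z i) (collisionFreeSet N) := by
  unfold gradH
  refine ContinuousOn.smul (continuousOn_const (c := (-(1 / (2 * Real.pi)) : ℝ)))
    (continuousOn_finsetSum _ fun j hj => ?_)
  have hne : ∀ z ∈ collisionFreeSet N, Complex.normSq (z i - z j) ≠ 0 := fun z hz =>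
    normSq_sub_ne_zero hz (Finset.ne_of_mem_erase hj).symm
  fun_prop (disch := exact hne)

lemma continuous_momI {N : ℕ} (Γ : Fin N → ℝ) : Continuous (momI Γ) := by
  unfold momI; fun_prop

lemma continuous_gradI {N : ℕ} (Γ : Fin N → ℝ) (i : Fin N) :
    Continuous (fun z => gradI Γ z i) := by
  unfold gradI; fun_prop

lemma mul_normSq_le_momI {N : ℕ} {Γ : Fin N → ℝ} (hΓ : ∀ i, 0 ≤ Γ i) (z : Fin N → ℂ)
    (i : Fin N) : Γ i * Complex.normSq (z i) ≤ momI Γ z :=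
  Finset.single_le_sum (f := fun j => Γ j * Complex.normSq (z j))
    (fun j _ => mul_nonneg (hΓ j) (Complex.normSq_nonneg _)) (Finset.mem_univ i)

lemma isCompact_momI_le {N : ℕ} {Γ : Fin N → ℝ} (hΓ : ∀ i, 0 < Γ i) (r : ℝ) :
    IsCompact {z | momI Γ z ≤ r} := by
  refine (isCompact_univ_pi fun i => isCompact_closedBall (0 : ℂ) √(r / Γ i)).of_isClosed_subset
    (isClosed_le (continuous_momI Γ) continuous_const) fun z hz i _ => ?_
  have hsq : ‖z i‖ ^ 2 ≤ r / Γ i := by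
    rw [le_div_iff₀ (hΓ i), Complex.sq_norm, mul_comm]
    exact (mul_normSq_le_momI (fun j => (hΓ j).le) z i).trans hz
  simpa using Real.abs_le_sqrt hsq

lemma exists_lt_of_not_collisionFree {N : ℕ} {w : Fin N → ℂ} (hw : ¬ CollisionFree w) :
    ∃ i j, i < j ∧ w i = w j := by
  obtain ⟨i, j, hij, hwij⟩ : ∃ i j, i ≠ j ∧ w i = w j := by
    simpa [CollisionFree] using hw
  rcases hij.lt_or_gt with h | h
  · exact ⟨i, j, h, hwij⟩
  · exact ⟨j, i, h, hwij.symm⟩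

lemma tendsto_vortexH_atTop_of_not_collisionFree {N : ℕ} {Γ : Fin N → ℝ} (hΓ : ∀ i, 0 < Γ i)
    {w : Fin N → ℂ} (hw : ¬ CollisionFree w) :
    Tendsto (vortexH Γ) (𝓝[collisionFreeSet N] w) atTop := by
  obtain ⟨i, j, hij, hwij⟩ := exists_lt_of_not_collisionFree hw
  set T : Fin N × Fin N → (Fin N → ℂ) → ℝ := fun p z =>
    if p.1 < p.2 then Γ p.1 * Γ p.2 * Real.log (Complex.normSq (z p.1 - z p.2)) else 0
  set U : Fin N × Fin N → (Fin N → ℂ) → ℝ := fun p z =>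
    Γ p.1 * Γ p.2 * Complex.normSq (z p.1 - z p.2)
  have hU : ∀ p z, 0 ≤ U p z := fun p z =>
    mul_nonneg (mul_pos (hΓ _) (hΓ _)).le (Complex.normSq_nonneg _)
  have hTU : ∀ p z, T p z ≤ U p z := by
    intro p z
    simp only [T]
    split_ifs
    · exact mul_le_mul_of_nonneg_left (Real.log_le_self (Complex.normSq_nonneg _))
        (mul_pos (hΓ _) (hΓ _)).le
    · exact hU p z
  have hsplit : ∀ z, ∑ p, T p z ≤ T (i, j) z + ∑ p, U p z := by
    intro z
    rw [← Finset.add_sum_erase _ _ (Finset.mem_univ (i, j))]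
    gcongr
    calc ∑ p ∈ Finset.univ.erase (i, j), T p z
        ≤ ∑ p ∈ Finset.univ.erase (i, j), U p z := Finset.sum_le_sum fun p _ => hTU p z
      _ ≤ ∑ p, U p z :=
        Finset.sum_le_sum_of_subset_of_nonneg (Finset.erase_subset _ _) fun p _ _ => hU p z
  have hpair : Tendsto (T (i, j)) (𝓝[collisionFreeSet N] w) atBot := by
    simp only [T, if_pos hij]
    refine (Real.tendsto_log_nhdsGT_zero.comp ?_).const_mul_atBot (mul_pos (hΓ i) (hΓ j))
    refine tendsto_nhdsWithin_iff.2 ⟨?_, eventually_nhdsWithin_of_forall fun z hz =>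
      (Complex.normSq_nonneg _).lt_of_ne' (normSq_sub_ne_zero hz hij.ne)⟩
    have hcont : Continuous fun z : Fin N → ℂ => Complex.normSq (z i - z j) := by fun_prop
    simpa [hwij] using (hcont.continuousWithinAt (s := collisionFreeSet N) (x := w)).tendsto
  have hrest : Tendsto (fun z => ∑ p, U p z) (𝓝[collisionFreeSet N] w) (𝓝 (∑ p, U p w)) := by
    have hcont : Continuous fun z => ∑ p, U p z := by fun_prop
    exact hcont.continuousWithinAt
  have hsum : Tendsto (fun z => ∑ p, T p z) (𝓝[collisionFreeSet N] w) atBot :=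
    tendsto_atBot_mono hsplit (hpair.atBot_add hrest)
  have hcoef : -(1 / (4 * Real.pi)) < 0 := by
    have := Real.pi_pos
    simp only [neg_lt_zero]
    positivity
  refine (hsum.const_mul_atBot_of_neg hcoef).congr fun z => ?_
  rw [vortexH, ← Fintype.sum_prod_type']

def relEqSublevel {N : ℕ} (Γ : Fin N → ℝ) (c C : ℝ) : Set (Fin N → ℂ) :=
  {z | CollisionFree z ∧ (∀ i, gradH Γ z i = c • gradI Γ z i) ∧ momI Γ z = 1 ∧ vortexH Γ z ≤ C}

lemma collisionFree_of_mem_closure_relEqSublevel {N : ℕ} {Γ : Fin N → ℝ} (hΓ : ∀ i, 0 < Γ i)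
    {c C : ℝ} {w : Fin N → ℂ} (hw : w ∈ closure (relEqSublevel Γ c C)) : CollisionFree w := by
  by_contra hcol
  have := mem_closure_iff_nhdsWithin_neBot.1 hw
  have htop : Tendsto (vortexH Γ) (𝓝[relEqSublevel Γ c C] w) atTop :=
    (tendsto_vortexH_atTop_of_not_collisionFree hΓ hcol).mono_left
      (nhdsWithin_mono w fun z hz => hz.1)
  obtain ⟨z, hgt, hle⟩ := ((htop.eventually_gt_atTop C).and
    (eventually_nhdsWithin_of_forall fun z (hz : z ∈ relEqSublevel Γ c C) => hz.2.2.2)).exists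
  exact hgt.not_ge hle

lemma isClosed_relEqSublevel {N : ℕ} {Γ : Fin N → ℝ} (hΓ : ∀ i, 0 < Γ i) (c C : ℝ) :
    IsClosed (relEqSublevel Γ c C) := by
  refine closure_subset_iff_isClosed.1 fun w hw => ?_
  have hcf := collisionFree_of_mem_closure_relEqSublevel hΓ hw
  have hnhds : collisionFreeSet N ∈ 𝓝 w := (isOpen_collisionFreeSet N).mem_nhds hcf
  have hlim : ∀ {β : Type} [TopologicalSpace β] {f : (Fin N → ℂ) → β} {t : Set β}, IsClosed t →
      ContinuousAt f w → MapsTo f (relEqSublevel Γ c C) t → f w ∈ t :=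
    fun ht hf hmaps => ht.closure_subset (hf.continuousWithinAt.mem_closure hw hmaps)
  refine ⟨hcf, fun i => sub_eq_zero.1 ?_, ?_, ?_⟩
  · exact hlim (f := fun z => gradH Γ z i - c • gradI Γ z i) isClosed_singleton
      (((continuousOn_gradH Γ i).continuousAt hnhds).sub
        ((continuous_gradI Γ i).continuousAt.const_smul c))
      fun z hz => by simp [hz.2.1 i]
  · exact hlim isClosed_singleton (continuous_momI Γ).continuousAt fun z hz => hz.2.2.1
  · exact hlim isClosed_Iic ((continuousOn_vortexH Γ).continuousAt hnhds) fun z hz => hz.2.2.2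

lemma isCompact_relEqSublevel {N : ℕ} {Γ : Fin N → ℝ} (hΓ : ∀ i, 0 < Γ i) (c C : ℝ) :
    IsCompact (relEqSublevel Γ c C) :=
  (isCompact_momI_le hΓ 1).of_isClosed_subset (isClosed_relEqSublevel hΓ c C)
    fun _ hz => hz.2.2.1.le

lemma isClosed_of_forall_isClosed_inter_Iic {α : Type*} [TopologicalSpace α] [LinearOrder α]
    [ClosedIciTopology α] [NoMaxOrder α] {S : Set α} (h : ∀ C, IsClosed (S ∩ Iic C)) :
    IsClosed S := by
  refine closure_subset_iff_isClosed.1 fun x hx => ?_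
  obtain ⟨y, hxy⟩ := exists_gt x
  have hloc : x ∈ closure (S ∩ Iio y) := by
    rw [inter_comm]
    exact isOpen_Iio.inter_closure ⟨mem_Iio.2 hxy, hx⟩
  exact ((h y).closure_subset (closure_mono (inter_subset_inter_right _ Iio_subset_Iic_self) hloc)).1

/-- the set of energies of normalised relative equilibria is closed. -/
theorem stmt10 {N : ℕ} (Γ : Fin N → ℝ) (hΓ : ∀ i, 0 < Γ i) :
    IsClosed {h : ℝ | ∃ z : Fin N → ℂ, CollisionFree z ∧
      (∀ i, gradH Γ z i = (-(totalL Γ / (4 * Real.pi))) • gradI Γ z i) ∧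
      momI Γ z = 1 ∧ vortexH Γ z = h} := by
  refine isClosed_of_forall_isClosed_inter_Iic fun C => ?_
  have himage : {h : ℝ | ∃ z : Fin N → ℂ, CollisionFree z ∧
      (∀ i, gradH Γ z i = (-(totalL Γ / (4 * Real.pi))) • gradI Γ z i) ∧
      momI Γ z = 1 ∧ vortexH Γ z = h} ∩ Iic C =
      vortexH Γ '' relEqSublevel Γ (-(totalL Γ / (4 * Real.pi))) C := by
    ext h
    constructor
    · rintro ⟨⟨z, hcf, hgrad, hI, rfl⟩, hC⟩
      exact ⟨z, ⟨hcf, hgrad, hI, hC⟩, rfl⟩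
    · rintro ⟨z, ⟨hcf, hgrad, hI, hC⟩, rfl⟩
      exact ⟨⟨z, hcf, hgrad, hI, rfl⟩, hC⟩
  rw [himage]
  exact ((isCompact_relEqSublevel hΓ _ C).image_of_continuousOn
    ((continuousOn_vortexH Γ).mono fun _ hz => hz.1)).isClosed
end

section
/- For positive vorticities, every sublevel-compatible energy surface of the reduced N-vortex Hamiltonian is bounded away from collisions: if W ∈ ℝ^{2N−2} satisfies Σ |W_i|² = 1 and H̄(W) = c, then each squared mutual distance |z_i − z_j|², expressed as a quadratic form Q_{ij}(W) in W, satisfies ε ≤ Q_{ij}(W) ≤ C for constants ε, C > 0 depending only on c and the vorticities; consequently the set {W ∈ S^{2N−3} : H̄(W) = c} is compact. -/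
open scoped BigOperators

/-! On the unit sphere every `Q i j` is at most `C₀`, so each term `Γ i Γ j log Q i j` of the
energy is at most `Γ i Γ j log (max C₀ 1)`. On a level set the sum of all terms is fixed, so each
single term is bounded below by the level minus the sum of these upper bounds; this gives a uniform
`ε ≤ Q i j`. The level set therefore lies in the closed set `{‖W‖ = 1, Q i j W ≥ ε}`, on which the
energy is continuous, so it is closed in the compact unit sphere. -/

open Real

theorem Finite.exists_pos_forall_le {ι : Type*} [Finite ι] (e : ι → ℝ) (he : ∀ i, 0 < e i) :
    ∃ ε > 0, ∀ i, ε ≤ e i := by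
  cases isEmpty_or_nonempty ι
  · exact ⟨1, one_pos, isEmptyElim⟩
  · obtain ⟨i₀, hi₀⟩ := Finite.exists_min e
    exact ⟨e i₀, he i₀, hi₀⟩

theorem Finset.sum_sub_sum_le_of_le {κ : Type*} {s : Finset κ} {f b : κ → ℝ} {k : κ}
    (hk : k ∈ s) (hfb : ∀ p ∈ s, f p ≤ b p) (hbk : 0 ≤ b k) :
    ∑ p ∈ s, f p - ∑ p ∈ s, b p ≤ f k := by
  classical
  have hrest : ∑ p ∈ s.erase k, f p ≤ ∑ p ∈ s.erase k, b p :=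
    Finset.sum_le_sum fun p hp => hfb p (Finset.mem_of_mem_erase hp)
  linarith [Finset.add_sum_erase s f hk, Finset.add_sum_erase s b hk]

theorem Finset.exp_le_of_sum_mul_log_eq {κ : Type*} {s : Finset κ} {w f : κ → ℝ} {C T : ℝ}
    (hw : ∀ p ∈ s, 0 < w p) (hf : ∀ p ∈ s, 0 < f p) (hfC : ∀ p ∈ s, f p ≤ C) (hC : 1 ≤ C)
    (hT : ∑ p ∈ s, w p * log (f p) = T) {k : κ} (hk : k ∈ s) :
    exp ((T - (∑ p ∈ s, w p) * log C) / w k) ≤ f k := by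
  have hterm : T - (∑ p ∈ s, w p) * log C ≤ w k * log (f k) := by
    rw [← hT, Finset.sum_mul]
    refine Finset.sum_sub_sum_le_of_le hk (fun p hp => ?_) ?_
    · exact mul_le_mul_of_nonneg_left (log_le_log (hf p hp) (hfC p hp)) (hw p hp).le
    · exact mul_nonneg (hw k hk).le (log_nonneg hC)
  calc exp ((T - (∑ p ∈ s, w p) * log C) / w k) ≤ exp (log (f k)) :=
        exp_le_exp.2 ((div_le_iff₀' (hw k hk)).2 hterm)
    _ = f k := exp_log (hf k hk)

theorem Finset.sum_sum_ite_lt {ι : Type*} [Fintype ι] [LinearOrder ι] (g : ι → ι → ℝ) :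
    (∑ i, ∑ j, if i < j then g i j else 0) =
      ∑ p ∈ Finset.univ.filter (fun p : ι × ι => p.1 < p.2), g p.1 p.2 := by
  rw [Finset.sum_filter, ← Finset.univ_product_univ, Finset.sum_product]

section PairLogSum

variable {ι X : Type*} [Fintype ι] [LinearOrder ι]

theorem exists_pos_le_of_sum_pairs_mul_log_eq {Γ : ι → ℝ} (hΓ : ∀ i, 0 < Γ i)
    (Q : ι → ι → X → ℝ) (C T : ℝ) :
    ∃ ε > 0, ∀ x, (∀ i j, i < j → 0 < Q i j x) → (∀ i j, i < j → Q i j x ≤ C) →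
      (∑ i, ∑ j, if i < j then Γ i * Γ j * log (Q i j x) else 0) = T →
      ∀ i j, i < j → ε ≤ Q i j x := by
  set P := Finset.univ.filter (fun p : ι × ι => p.1 < p.2)
  obtain ⟨ε, hε, hεle⟩ := Finite.exists_pos_forall_le
    (fun p : ι × ι => exp ((T - (∑ q ∈ P, Γ q.1 * Γ q.2) * log (max C 1)) / (Γ p.1 * Γ p.2)))
    (fun _ => exp_pos _)
  refine ⟨ε, hε, fun x hpos hle hT i j hij => (hεle (i, j)).trans ?_⟩
  have hP : ∀ {p}, p ∈ P ↔ p.1 < p.2 := by simp [P]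
  rw [Finset.sum_sum_ite_lt (fun i j => Γ i * Γ j * log (Q i j x))] at hT
  exact Finset.exp_le_of_sum_mul_log_eq (fun p _ => mul_pos (hΓ p.1) (hΓ p.2))
    (fun p hp => hpos _ _ (hP.1 hp)) (fun p hp => (hle _ _ (hP.1 hp)).trans (le_max_left _ _))
    (le_max_right _ _) hT (hP.2 hij)

variable [TopologicalSpace X]

theorem continuousOn_sum_pairs_mul_log (Γ : ι → ℝ) {Q : ι → ι → X → ℝ}
    (hQ : ∀ i j, Continuous (Q i j)) :
    ContinuousOn (fun x => ∑ i, ∑ j, if i < j then Γ i * Γ j * log (Q i j x) else 0)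
      {x | ∀ i j, i < j → 0 < Q i j x} := by
  refine continuousOn_finsetSum _ fun i _ => continuousOn_finsetSum _ fun j _ => ?_
  by_cases hij : i < j
  · simp only [if_pos hij]
    exact continuousOn_const.mul
      ((hQ i j).continuousOn.log fun x hx => (hx i j hij).ne')
  · simp only [if_neg hij]
    exact continuousOn_const

end PairLogSum

theorem isClosed_setOf_forall_lt_le {ι X : Type*} [LT ι] [TopologicalSpace X]
    {Q : ι → ι → X → ℝ} (hQ : ∀ i j, Continuous (Q i j)) (ε : ℝ) :
    IsClosed {x | ∀ i j, i < j → ε ≤ Q i j x} := by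
  simp only [Set.ofPred_forall]
  exact isClosed_iInter fun i => isClosed_iInter fun j => isClosed_iInter fun _ =>
    isClosed_le continuous_const (hQ i j)

theorem stmt19_general {N m : ℕ} (Γ : Fin N → ℝ) (hΓ : ∀ i, 0 < Γ i)
    (Q : Fin N → Fin N → EuclideanSpace ℝ (Fin m) → ℝ)
    (hQcont : ∀ i j, Continuous (Q i j))
    (C₀ : ℝ) (hC₀ : 0 < C₀)
    (hQbound : ∀ i j W, Q i j W ≤ C₀ * ‖W‖ ^ 2)
    (c : ℝ) (Hbar : EuclideanSpace ℝ (Fin m) → ℝ)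
    (hHbar : ∀ W, Hbar W =
      -(1 / (4 * Real.pi)) * ∑ i, ∑ j, if i < j then Γ i * Γ j * Real.log (Q i j W) else 0) :
    (∃ ε > (0 : ℝ), ∃ C > (0 : ℝ), ∀ W : EuclideanSpace ℝ (Fin m), ‖W‖ = 1 →
      (∀ i j, i < j → 0 < Q i j W) → Hbar W = c →
      ∀ i j, i < j → ε ≤ Q i j W ∧ Q i j W ≤ C) ∧
    IsCompact {W : EuclideanSpace ℝ (Fin m) |
      ‖W‖ = 1 ∧ (∀ i j, i < j → 0 < Q i j W) ∧ Hbar W = c} := by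
  have hQC : ∀ W : EuclideanSpace ℝ (Fin m), ‖W‖ = 1 → ∀ i j, Q i j W ≤ C₀ := fun W hW i j => by
    simpa [hW] using hQbound i j W
  have hlevel : ∀ W, Hbar W = c →
      (∑ i, ∑ j, if i < j then Γ i * Γ j * log (Q i j W) else 0) = -(4 * π * c) := by
    intro W hc
    rw [← hc, hHbar]
    field_simp
  obtain ⟨ε, hε, hlower⟩ := exists_pos_le_of_sum_pairs_mul_log_eq hΓ Q C₀ (-(4 * π * c))
  have hsurface : ∀ W, ‖W‖ = 1 → (∀ i j, i < j → 0 < Q i j W) → Hbar W = c →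
      ∀ i j, i < j → ε ≤ Q i j W := fun W hW hpos hc =>
    hlower W hpos (fun i j _ => hQC W hW i j) (hlevel W hc)
  refine ⟨⟨ε, hε, C₀, hC₀, fun W hW hpos hc i j hij =>
    ⟨hsurface W hW hpos hc i j hij, hQC W hW i j⟩⟩, ?_⟩
  have hset : {W : EuclideanSpace ℝ (Fin m) | ‖W‖ = 1 ∧ (∀ i j, i < j → 0 < Q i j W) ∧ Hbar W = c}
      = {W | ‖W‖ = 1 ∧ ∀ i j, i < j → ε ≤ Q i j W} ∩ Hbar ⁻¹' {c} := by
    ext W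
    exact ⟨fun ⟨hW, hpos, hc⟩ => ⟨⟨hW, hsurface W hW hpos hc⟩, hc⟩,
      fun ⟨⟨hW, hle⟩, hc⟩ => ⟨hW, fun i j hij => hε.trans_le (hle i j hij), hc⟩⟩
  rw [hset]
  refine (isCompact_sphere (0 : EuclideanSpace ℝ (Fin m)) 1).of_isClosed_subset ?_
    fun W hW => mem_sphere_zero_iff_norm.2 hW.1.1
  refine ContinuousOn.preimage_isClosed_of_isClosed ?_ ?_ isClosed_singleton
  · rw [funext hHbar]
    refine continuousOn_const.mul ((continuousOn_sum_pairs_mul_log Γ hQcont).mono ?_)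
    exact fun W hW i j hij => hε.trans_le (hW.2 i j hij)
  · exact (isClosed_eq continuous_norm continuous_const).inter
      (isClosed_setOf_forall_lt_le hQcont ε)

/-- on the reduced energy surface, all squared mutual distances Q_{ij}(W) are
bounded between positive constants, and the energy surface on the unit sphere is compact. -/
theorem stmt19 {N m : ℕ} (Γ : Fin N → ℝ) (hΓ : ∀ i, 0 < Γ i)
    (Q : Fin N → Fin N → EuclideanSpace ℝ (Fin m) → ℝ)
    (hQcont : ∀ i j, Continuous (Q i j))
    (hQnonneg : ∀ i j W, 0 ≤ Q i j W)
    (C₀ : ℝ) (hC₀ : 0 < C₀)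
    (hQbound : ∀ i j W, Q i j W ≤ C₀ * ‖W‖ ^ 2)
    (c : ℝ) (Hbar : EuclideanSpace ℝ (Fin m) → ℝ)
    (hHbar : ∀ W, Hbar W =
      -(1 / (4 * Real.pi)) * ∑ i, ∑ j, if i < j then Γ i * Γ j * Real.log (Q i j W) else 0) :
    (∃ ε > (0 : ℝ), ∃ C > (0 : ℝ), ∀ W : EuclideanSpace ℝ (Fin m), ‖W‖ = 1 →
      (∀ i j, i < j → 0 < Q i j W) → Hbar W = c →
      ∀ i j, i < j → ε ≤ Q i j W ∧ Q i j W ≤ C) ∧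
    IsCompact {W : EuclideanSpace ℝ (Fin m) |
      ‖W‖ = 1 ∧ (∀ i j, i < j → 0 < Q i j W) ∧ Hbar W = c} :=
  stmt19_general Γ hΓ Q hQcont C₀ hC₀ hQbound c Hbar hHbar
end
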